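/- arXiv:2509.21570 — 2 statements merged into one kernel-verified Lean document; each statement's English description precedes it below -/
import Mathlib

section
/- Under the hypotheses of the previous statement, the map z ↦ G(z*(z)) is Lipschitz continuous with constant ‖G‖_op² / μ, where ‖G‖_op is the operator norm of G; consequently the smoothed gap gap_μ(z) = max_{z'∈Z}{⟨G(z'),z⟩ − μR(z')} is differentiable with (‖G‖_op²/μ)-Lipschitz gradient ∇gap_μ(z) = G(z*(z)). -/
open scoped RealInnerProductSpace

/-- Nesterov smoothing lemma (Hilbert-space version): the map `z ↦ G(z*(z))` is
`‖G‖²/μ`-Lipschitz, and the smoothed gap `gap_μ(z) = max_{z'∈Z}{⟪G(z'),z⟫ − μR(z')}`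
is differentiable with gradient `∇gap_μ(z) = G(z*(z))`, which is `‖G‖²/μ`-Lipschitz. -/
theorem smoothed_gap_gradient_lipschitz
    {E : Type*} [NormedAddCommGroup E] [InnerProductSpace ℝ E] [FiniteDimensional ℝ E]
    (Z : Set E) (hZne : Z.Nonempty) (hZc : IsCompact Z) (hZconv : Convex ℝ Z)
    (G : E →L[ℝ] E) (R : E → ℝ) (hR : StrongConvexOn Z 1 R)
    (μ : ℝ) (hμ : 0 < μ) (zstar : E → E)
    (hzs : ∀ z : E, zstar z ∈ Z ∧
      ∀ w ∈ Z, (⟪G w, z⟫ : ℝ) - μ * R w ≤ (⟪G (zstar z), z⟫ : ℝ) - μ * R (zstar z)) :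
    (∀ z₁ z₂ : E, ‖G (zstar z₁) - G (zstar z₂)‖ ≤ ‖G‖ ^ 2 / μ * ‖z₁ - z₂‖) ∧
    (∀ z : E,
      HasGradientAt (fun w => sSup ((fun z' => (⟪G z', w⟫ : ℝ) - μ * R z') '' Z))
        (G (zstar z)) z) := by
  -- Key strong maximality inequality
  have key : ∀ z : E, ∀ w ∈ Z,
      (⟪G w, z⟫ : ℝ) - μ * R w + μ / 2 * ‖w - zstar z‖ ^ 2
        ≤ (⟪G (zstar z), z⟫ : ℝ) - μ * R (zstar z) := by
    intro z w hw
    obtain ⟨hxZ, hmax⟩ := hzs z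
    set x := zstar z with hx
    have ht : ∀ t ∈ Set.Ioo (0 : ℝ) 1,
        (⟪G w, z⟫ : ℝ) - μ * R w + μ * (1 - t) / 2 * ‖w - x‖ ^ 2
          ≤ (⟪G x, z⟫ : ℝ) - μ * R x := by
      rintro t ⟨ht0, ht1⟩
      have hb : (0:ℝ) ≤ 1 - t := by linarith
      have hmem : t • w + (1 - t) • x ∈ Z :=
        hZconv hw hxZ (le_of_lt ht0) hb (by ring)
      have hRs := hR.2 hw hxZ (le_of_lt ht0) hb (by ring)
      simp only [smul_eq_mul] at hRs
      have hlin : (⟪G (t • w + (1 - t) • x), z⟫ : ℝ)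
          = t * ⟪G w, z⟫ + (1 - t) * ⟪G x, z⟫ := by
        rw [map_add, map_smul, map_smul, inner_add_left, inner_smul_left, inner_smul_left]
        norm_num
      have hle := hmax _ hmem
      rw [hlin] at hle
      nlinarith [hle, hRs, mul_le_mul_of_nonneg_left hRs (le_of_lt hμ)]
    have hcont : Filter.Tendsto
        (fun t : ℝ => (⟪G w, z⟫ : ℝ) - μ * R w + μ * (1 - t) / 2 * ‖w - x‖ ^ 2)
        (nhdsWithin 0 (Set.Ioi 0))
        (nhds ((⟪G w, z⟫ : ℝ) - μ * R w + μ * (1 - (0:ℝ)) / 2 * ‖w - x‖ ^ 2)) := by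
      apply Filter.Tendsto.mono_left _ nhdsWithin_le_nhds
      exact (Continuous.tendsto (by continuity) 0)
    have hev : ∀ᶠ t in nhdsWithin (0:ℝ) (Set.Ioi 0),
        (⟪G w, z⟫ : ℝ) - μ * R w + μ * (1 - t) / 2 * ‖w - x‖ ^ 2
          ≤ (⟪G x, z⟫ : ℝ) - μ * R x := by
      filter_upwards [Ioo_mem_nhdsGT_of_mem (Set.left_mem_Ico.2 one_pos)] with t htm
      exact ht t htm
    have := le_of_tendsto hcont hev
    simpa using this
  -- Lipschitz continuity of `z ↦ zstar z`
  have hGnn : (0:ℝ) ≤ ‖G‖ := norm_nonneg _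
  have hzlip : ∀ z₁ z₂ : E, ‖zstar z₁ - zstar z₂‖ ≤ ‖G‖ / μ * ‖z₁ - z₂‖ := by
    intro z₁ z₂
    set x₁ := zstar z₁
    set x₂ := zstar z₂
    have h1 := key z₁ x₂ (hzs z₂).1
    have h2 := key z₂ x₁ (hzs z₁).1
    have hnorm : ‖x₂ - x₁‖ = ‖x₁ - x₂‖ := norm_sub_rev _ _
    rw [hnorm] at h1
    have hsum : μ * ‖x₁ - x₂‖ ^ 2 ≤ (⟪G x₁ - G x₂, z₁ - z₂⟫ : ℝ) := by
      have hexp : (⟪G x₁ - G x₂, z₁ - z₂⟫ : ℝ)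
          = ⟪G x₁, z₁⟫ - ⟪G x₂, z₁⟫ - ⟪G x₁, z₂⟫ + ⟪G x₂, z₂⟫ := by
        rw [inner_sub_left, inner_sub_right, inner_sub_right]; ring
      rw [hexp]; linarith
    have hcs : (⟪G x₁ - G x₂, z₁ - z₂⟫ : ℝ) ≤ ‖G‖ * ‖x₁ - x₂‖ * ‖z₁ - z₂‖ := by
      calc (⟪G x₁ - G x₂, z₁ - z₂⟫ : ℝ) ≤ ‖G x₁ - G x₂‖ * ‖z₁ - z₂‖ := by
            exact (real_inner_le_norm _ _)
        _ ≤ ‖G‖ * ‖x₁ - x₂‖ * ‖z₁ - z₂‖ := by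
            have : ‖G x₁ - G x₂‖ ≤ ‖G‖ * ‖x₁ - x₂‖ := by
              rw [← map_sub]; exact G.le_opNorm _
            exact mul_le_mul_of_nonneg_right this (norm_nonneg _)
    rcases eq_or_lt_of_le (norm_nonneg (x₁ - x₂)) with hzero | hpos
    · rw [← hzero]
      positivity
    · have : μ * ‖x₁ - x₂‖ ^ 2 ≤ ‖G‖ * ‖x₁ - x₂‖ * ‖z₁ - z₂‖ := le_trans hsum hcs
      rw [div_mul_eq_mul_div, le_div_iff₀ hμ]
      nlinarith
  have hlip : ∀ z₁ z₂ : E, ‖G (zstar z₁) - G (zstar z₂)‖ ≤ ‖G‖ ^ 2 / μ * ‖z₁ - z₂‖ := by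
    intro z₁ z₂
    calc ‖G (zstar z₁) - G (zstar z₂)‖ ≤ ‖G‖ * ‖zstar z₁ - zstar z₂‖ := by
          rw [← map_sub]; exact G.le_opNorm _
      _ ≤ ‖G‖ * (‖G‖ / μ * ‖z₁ - z₂‖) :=
          mul_le_mul_of_nonneg_left (hzlip z₁ z₂) hGnn
      _ = ‖G‖ ^ 2 / μ * ‖z₁ - z₂‖ := by ring
  refine ⟨hlip, ?_⟩
  -- the gap function
  have hgap : ∀ w : E, sSup ((fun z' => (⟪G z', w⟫ : ℝ) - μ * R z') '' Z)
      = (⟪G (zstar w), w⟫ : ℝ) - μ * R (zstar w) := by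
    intro w
    apply IsGreatest.csSup_eq
    exact ⟨⟨zstar w, (hzs w).1, rfl⟩, by rintro _ ⟨z', hz', rfl⟩; exact (hzs w).2 z' hz'⟩
  intro z
  rw [hasGradientAt_iff_isLittleO]
  set g := G (zstar z) with hg
  set C := ‖G‖ ^ 2 / μ with hC
  have hCnn : (0:ℝ) ≤ C := by positivity
  have hbound : ∀ x' : E,
      ‖sSup ((fun z' => (⟪G z', x'⟫ : ℝ) - μ * R z') '' Z)
        - sSup ((fun z' => (⟪G z', z⟫ : ℝ) - μ * R z') '' Z) - ⟪g, x' - z⟫‖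
      ≤ C * ‖x' - z‖ ^ 2 := by
    intro x'
    rw [hgap x', hgap z]
    set e := (⟪G (zstar x'), x'⟫ : ℝ) - μ * R (zstar x')
      - ((⟪G (zstar z), z⟫ : ℝ) - μ * R (zstar z)) - ⟪g, x' - z⟫ with he
    have hlo : 0 ≤ e := by
      have h1 := (hzs x').2 (zstar z) (hzs z).1
      rw [he, hg, inner_sub_right]
      linarith
    have hhi : e ≤ C * ‖x' - z‖ ^ 2 := by
      have h2 := (hzs z).2 (zstar x') (hzs x').1
      have h3 : e ≤ (⟪G (zstar x') - g, x' - z⟫ : ℝ) := by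
        rw [he, hg, inner_sub_left, inner_sub_right, inner_sub_right]
        linarith
      have h4 : (⟪G (zstar x') - g, x' - z⟫ : ℝ) ≤ C * ‖x' - z‖ ^ 2 := by
        calc (⟪G (zstar x') - g, x' - z⟫ : ℝ) ≤ ‖G (zstar x') - g‖ * ‖x' - z‖ :=
              real_inner_le_norm _ _
          _ ≤ C * ‖x' - z‖ * ‖x' - z‖ :=
              mul_le_mul_of_nonneg_right (hlip x' z) (norm_nonneg _)
          _ = C * ‖x' - z‖ ^ 2 := by ring
      linarith
    rw [Real.norm_eq_abs, abs_of_nonneg hlo]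
    exact hhi
  rw [Asymptotics.isLittleO_iff]
  intro ε hε
  have hball : Metric.ball z (ε / (C + 1)) ∈ nhds z :=
    Metric.ball_mem_nhds z (by positivity)
  filter_upwards [hball] with x' hx'
  have hdist : ‖x' - z‖ < ε / (C + 1) := by
    rwa [Metric.mem_ball, dist_eq_norm] at hx'
  calc ‖sSup ((fun z' => (⟪G z', x'⟫ : ℝ) - μ * R z') '' Z)
        - sSup ((fun z' => (⟪G z', z⟫ : ℝ) - μ * R z') '' Z) - ⟪g, x' - z⟫‖
      ≤ C * ‖x' - z‖ ^ 2 := hbound x'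
    _ = C * ‖x' - z‖ * ‖x' - z‖ := by ring
    _ ≤ ε * ‖x' - z‖ := by
        apply mul_le_mul_of_nonneg_right _ (norm_nonneg _)
        have h1 : C * ‖x' - z‖ ≤ (C + 1) * (ε / (C + 1)) := by
          apply mul_le_mul (by linarith) (le_of_lt hdist) (norm_nonneg _) (by positivity)
        rw [mul_div_cancel₀] at h1
        · exact h1
        · positivity
end

section
/- SP-MS from one-sided bounds: suppose the two one-sided bounds max_{β'}(Tr(α F(β')) − v) ≥ c‖α − Π_{A*}(α)‖_F and max_{α'}(v − Tr(α' F(β))) ≥ c‖β − Π_{B*}(β)‖_F hold for all (α,β) ∈ Spec_n × Spec_m, and the joint space has diameter at most 2. Then for every z = (α,β) not in Z* := A* × B*: sup_{z'∈Z, z'≠z} ⟨G(z), z − z'⟩ / ‖z − z'‖_F ≥ (c/2)·‖z − Π_{Z*}(z)‖_F, where G(α,β) = (F(β), −F*(α)). -/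
open scoped ComplexOrder Matrix

def spectraplex (d : ℕ) : Set (Matrix (Fin d) (Fin d) ℂ) :=
  {X | X.PosSemidef ∧ X.trace = 1}

noncomputable def frobNorm {d : ℕ} (A : Matrix (Fin d) (Fin d) ℂ) : ℝ :=
  Real.sqrt (Matrix.trace (Aᴴ * A)).re

/-!
Write `z = (α, β)` and `z' = (α', β')`. By the adjoint identity the numerator
`⟪G z, z - z'⟫` equals `(Tr(α F β') - v) + (v - Tr(α' F β))`, a sum of the two one-sided gaps,
and the two sups can be approached independently. Their sum is at least
`c (‖α - Π α‖ + ‖β - Π β‖) ≥ c ‖z - Π z‖ > 0`, and dividing a positive numerator by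
`‖z - z'‖ ≤ 2` loses at most the factor `2`.
-/

section FrobeniusNorm

variable {d : ℕ}

lemma frobNorm_nonneg (A : Matrix (Fin d) (Fin d) ℂ) : 0 ≤ frobNorm A :=
  Real.sqrt_nonneg _

lemma frobNorm_pos {A : Matrix (Fin d) (Fin d) ℂ} (h : A ≠ 0) : 0 < frobNorm A := by
  obtain ⟨hre, him⟩ :=
    Complex.nonneg_iff.mp (Matrix.posSemidef_conjTranspose_mul_self A).trace_nonneg
  refine Real.sqrt_pos.mpr (lt_of_le_of_ne hre fun h0 => h ?_)
  exact Matrix.trace_conjTranspose_mul_self_eq_zero_iff.mp (Complex.ext h0.symm him.symm)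

lemma frobNorm_conjTranspose (A : Matrix (Fin d) (Fin d) ℂ) : frobNorm Aᴴ = frobNorm A := by
  rw [frobNorm, frobNorm, Matrix.conjTranspose_conjTranspose, Matrix.trace_mul_comm]

/-- Cauchy–Schwarz for `⟪A, B⟫ = Tr(B Aᴴ)`, i.e. `Matrix.toMatrixInnerProductSpace 1`. -/
lemma abs_re_trace_mul_le_frobNorm_mul (X Y : Matrix (Fin d) (Fin d) ℂ) :
    |(X * Y).trace.re| ≤ frobNorm X * frobNorm Y := by
  let := Matrix.toMatrixSeminormedAddCommGroup (1 : Matrix (Fin d) (Fin d) ℂ) .one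
  let := Matrix.toMatrixInnerProductSpace (1 : Matrix (Fin d) (Fin d) ℂ) .one
  have hinner (A B : Matrix (Fin d) (Fin d) ℂ) : inner ℂ A B = (B * Aᴴ).trace := by
    change (B * 1 * Aᴴ).trace = _
    rw [Matrix.mul_one]
  have hnorm (A : Matrix (Fin d) (Fin d) ℂ) : ‖A‖ = frobNorm A := by
    rw [norm_eq_sqrt_re_inner (𝕜 := ℂ), hinner, ← frobNorm_conjTranspose, frobNorm,
      Matrix.conjTranspose_conjTranspose]
    rfl
  calc |(X * Y).trace.re| ≤ ‖inner ℂ Xᴴ Y‖ := by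
        rw [hinner, Matrix.conjTranspose_conjTranspose, Matrix.trace_mul_comm]
        exact Complex.abs_re_le_norm _
    _ ≤ ‖Xᴴ‖ * ‖Y‖ := norm_inner_le_norm _ _
    _ = frobNorm X * frobNorm Y := by rw [hnorm, hnorm, frobNorm_conjTranspose]

end FrobeniusNorm

section PairFrobDist

variable {n m : ℕ}

/-- `‖z - z'‖_F` for `z = (α, β)` and `z' = (α', β')`. -/
noncomputable def pairFrobDist (α α' : Matrix (Fin n) (Fin n) ℂ) (β β' : Matrix (Fin m) (Fin m) ℂ) :
    ℝ :=
  Real.sqrt (frobNorm (α - α') ^ 2 + frobNorm (β - β') ^ 2)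

variable {α α' : Matrix (Fin n) (Fin n) ℂ} {β β' : Matrix (Fin m) (Fin m) ℂ}

lemma frobNorm_sub_le_pairFrobDist_left : frobNorm (α - α') ≤ pairFrobDist α α' β β' :=
  Real.le_sqrt_of_sq_le (le_add_of_nonneg_right (sq_nonneg _))

lemma frobNorm_sub_le_pairFrobDist_right : frobNorm (β - β') ≤ pairFrobDist α α' β β' :=
  Real.le_sqrt_of_sq_le (le_add_of_nonneg_left (sq_nonneg _))

lemma pairFrobDist_le_add :
    pairFrobDist α α' β β' ≤ frobNorm (α - α') + frobNorm (β - β') := by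
  have ha := frobNorm_nonneg (α - α')
  have hb := frobNorm_nonneg (β - β')
  exact Real.sqrt_le_iff.mpr ⟨by positivity, by nlinarith⟩

lemma pairFrobDist_pos (h : (α', β') ≠ (α, β)) : 0 < pairFrobDist α α' β β' := by
  have ha := frobNorm_nonneg (α - α')
  have hb := frobNorm_nonneg (β - β')
  refine Real.sqrt_pos.mpr ?_
  by_cases hα : α' = α
  · have := frobNorm_pos (A := β - β') (sub_ne_zero.mpr fun hβ => h (by rw [hα, hβ]))
    positivity
  · have := frobNorm_pos (sub_ne_zero.mpr (Ne.symm hα))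
    positivity

end PairFrobDist

section DirectionalRatios

variable {n m : ℕ}

/-- The quotients `⟪(P, -Q), z - z'⟫ / ‖z - z'‖_F` over all `z' ∈ s ×ˢ t` other than
`z = (α, β)`; with `P = F β` and `Q = F* α` this is the set whose sup the theorem bounds. -/
def directionalRatios (P α : Matrix (Fin n) (Fin n) ℂ) (Q β : Matrix (Fin m) (Fin m) ℂ)
    (s : Set (Matrix (Fin n) (Fin n) ℂ)) (t : Set (Matrix (Fin m) (Fin m) ℂ)) : Set ℝ :=
  {r : ℝ | ∃ α' ∈ s, ∃ β' ∈ t, (α', β') ≠ (α, β) ∧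
    r = ((Matrix.trace (P * (α - α'))).re - (Matrix.trace (Q * (β - β'))).re) /
      pairFrobDist α α' β β'}

variable {P α : Matrix (Fin n) (Fin n) ℂ} {Q β : Matrix (Fin m) (Fin m) ℂ}
  {s : Set (Matrix (Fin n) (Fin n) ℂ)} {t : Set (Matrix (Fin m) (Fin m) ℂ)}

lemma bddAbove_directionalRatios : BddAbove (directionalRatios P α Q β s t) := by
  refine ⟨frobNorm P + frobNorm Q, ?_⟩
  rintro r ⟨α', -, β', -, hne, rfl⟩
  have hP := (abs_le.mp (abs_re_trace_mul_le_frobNorm_mul P (α - α'))).2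
  have hQ := (abs_le.mp (abs_re_trace_mul_le_frobNorm_mul Q (β - β'))).1
  have hα : frobNorm P * frobNorm (α - α') ≤ frobNorm P * pairFrobDist α α' β β' :=
    mul_le_mul_of_nonneg_left frobNorm_sub_le_pairFrobDist_left (frobNorm_nonneg P)
  have hβ : frobNorm Q * frobNorm (β - β') ≤ frobNorm Q * pairFrobDist α α' β β' :=
    mul_le_mul_of_nonneg_left frobNorm_sub_le_pairFrobDist_right (frobNorm_nonneg Q)
  rw [div_le_iff₀ (pairFrobDist_pos hne)]
  linarith

lemma half_le_sSup_directionalRatios {α' : Matrix (Fin n) (Fin n) ℂ}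
    {β' : Matrix (Fin m) (Fin m) ℂ} (hα' : α' ∈ s) (hβ' : β' ∈ t)
    (hdist : pairFrobDist α α' β β' ≤ 2)
    (hpos : 0 < (Matrix.trace (P * (α - α'))).re - (Matrix.trace (Q * (β - β'))).re) :
    ((Matrix.trace (P * (α - α'))).re - (Matrix.trace (Q * (β - β'))).re) / 2 ≤
      sSup (directionalRatios P α Q β s t) := by
  have hne : (α', β') ≠ (α, β) := by
    rintro ⟨⟩
    simp at hpos
  calc _ ≤ ((Matrix.trace (P * (α - α'))).re - (Matrix.trace (Q * (β - β'))).re) /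
        pairFrobDist α α' β β' := div_le_div_of_nonneg_left hpos.le (pairFrobDist_pos hne) hdist
    _ ≤ _ := le_csSup bddAbove_directionalRatios ⟨α', hα', β', hβ', hne, rfl⟩

end DirectionalRatios

lemma exists_lt_add_of_lt_csSup_add {s t : Set ℝ} (hs : s.Nonempty) (ht : t.Nonempty) {x : ℝ}
    (h : x < sSup s + sSup t) : ∃ a ∈ s, ∃ b ∈ t, x < a + b := by
  obtain ⟨a, ha, hxa⟩ := exists_lt_of_lt_csSup hs
    (show sSup s - (sSup s + sSup t - x) / 2 < sSup s by linarith)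
  obtain ⟨b, hb, hxb⟩ := exists_lt_of_lt_csSup ht
    (show sSup t - (sSup s + sSup t - x) / 2 < sSup t by linarith)
  exact ⟨a, ha, b, hb, by linarith⟩

section Game

variable {n m : ℕ} (F : Matrix (Fin m) (Fin m) ℂ → Matrix (Fin n) (Fin n) ℂ)
  (Fadj : Matrix (Fin n) (Fin n) ℂ → Matrix (Fin m) (Fin m) ℂ)

lemma re_trace_sub_sub_eq_of_adjoint
    (hadj : ∀ A B, (Matrix.trace (A * F B)).re = (Matrix.trace (Fadj A * B)).re)
    (α α' : Matrix (Fin n) (Fin n) ℂ) (β β' : Matrix (Fin m) (Fin m) ℂ) :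
    (Matrix.trace (F β * (α - α'))).re - (Matrix.trace (Fadj α * (β - β'))).re =
      (Matrix.trace (α * F β')).re - (Matrix.trace (α' * F β)).re := by
  rw [mul_sub, mul_sub, Matrix.trace_sub, Matrix.trace_sub, Complex.sub_re, Complex.sub_re,
    ← hadj, ← hadj, Matrix.trace_mul_comm (F β), Matrix.trace_mul_comm (F β)]
  ring

lemma sSup_gaps_add_le_two_mul_sSup_directionalRatios
    (hadj : ∀ A B, (Matrix.trace (A * F B)).re = (Matrix.trace (Fadj A * B)).re)
    (v : ℝ) {s : Set (Matrix (Fin n) (Fin n) ℂ)} {t : Set (Matrix (Fin m) (Fin m) ℂ)}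
    (hs : s.Nonempty) (ht : t.Nonempty) (α : Matrix (Fin n) (Fin n) ℂ)
    (β : Matrix (Fin m) (Fin m) ℂ)
    (hdiam : ∀ α' ∈ s, ∀ β' ∈ t, pairFrobDist α α' β β' ≤ 2)
    (hpos : 0 < sSup ((fun β' => (Matrix.trace (α * F β')).re - v) '' t) +
      sSup ((fun α' => v - (Matrix.trace (α' * F β)).re) '' s)) :
    sSup ((fun β' => (Matrix.trace (α * F β')).re - v) '' t) +
        sSup ((fun α' => v - (Matrix.trace (α' * F β)).re) '' s) ≤
      2 * sSup (directionalRatios (F β) α (Fadj α) β s t) := by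
  refine le_of_forall_lt fun x hx => ?_
  obtain ⟨_, ⟨β', hβ', rfl⟩, _, ⟨α', hα', rfl⟩, hlt⟩ :=
    exists_lt_add_of_lt_csSup_add (ht.image _) (hs.image _) (max_lt hx hpos)
  have hgap := re_trace_sub_sub_eq_of_adjoint F Fadj hadj α α' β β'
  have hhalf := half_le_sSup_directionalRatios hα' hβ' (hdiam α' hα' β' hβ')
    (show 0 < (Matrix.trace (F β * (α - α'))).re - (Matrix.trace (Fadj α * (β - β'))).re by
      rw [hgap]; linarith [le_max_right x 0])
  rw [hgap] at hhalf
  linarith [le_max_left x 0]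

end Game

theorem spms_from_one_sided_bounds_general (n m : ℕ)
    (F : Matrix (Fin m) (Fin m) ℂ →ₗ[ℝ] Matrix (Fin n) (Fin n) ℂ)
    (Fadj : Matrix (Fin n) (Fin n) ℂ →ₗ[ℝ] Matrix (Fin m) (Fin m) ℂ)
    (hadj : ∀ (A : Matrix (Fin n) (Fin n) ℂ) (B : Matrix (Fin m) (Fin m) ℂ),
      (Matrix.trace (A * F B)).re = (Matrix.trace (Fadj A * B)).re)
    (v : ℝ)
    (Astar : Set (Matrix (Fin n) (Fin n) ℂ))
    (Bstar : Set (Matrix (Fin m) (Fin m) ℂ))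
    (c : ℝ) (hc : 0 < c)
    (hbound1 : ∀ α ∈ spectraplex n, ∀ αp ∈ Astar,
      (∀ y ∈ Astar, frobNorm (α - αp) ≤ frobNorm (α - y)) →
      c * frobNorm (α - αp) ≤
        sSup ((fun β' => (Matrix.trace (α * F β')).re - v) '' spectraplex m))
    (hbound2 : ∀ β ∈ spectraplex m, ∀ βp ∈ Bstar,
      (∀ y ∈ Bstar, frobNorm (β - βp) ≤ frobNorm (β - y)) →
      c * frobNorm (β - βp) ≤
        sSup ((fun α' => v - (Matrix.trace (α' * F β)).re) '' spectraplex n))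
    (hdiam : ∀ α ∈ spectraplex n, ∀ α' ∈ spectraplex n, ∀ β ∈ spectraplex m,
      ∀ β' ∈ spectraplex m,
      Real.sqrt (frobNorm (α - α') ^ 2 + frobNorm (β - β') ^ 2) ≤ 2) :
    ∀ α ∈ spectraplex n, ∀ β ∈ spectraplex m, (α, β) ∉ Astar ×ˢ Bstar →
    ∀ αp ∈ Astar, (∀ y ∈ Astar, frobNorm (α - αp) ≤ frobNorm (α - y)) →
    ∀ βp ∈ Bstar, (∀ y ∈ Bstar, frobNorm (β - βp) ≤ frobNorm (β - y)) →
      c / 2 * Real.sqrt (frobNorm (α - αp) ^ 2 + frobNorm (β - βp) ^ 2) ≤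
        sSup {r : ℝ | ∃ α' ∈ spectraplex n, ∃ β' ∈ spectraplex m, (α', β') ≠ (α, β) ∧
          r = ((Matrix.trace (F β * (α - α'))).re - (Matrix.trace (Fadj α * (β - β'))).re) /
            Real.sqrt (frobNorm (α - α') ^ 2 + frobNorm (β - β') ^ 2)} := by
  intro α hα β hβ hz αp hαp hαp_min βp hβp hβp_min
  have hdist_pos : 0 < pairFrobDist α αp β βp :=
    pairFrobDist_pos fun h => hz (h ▸ Set.mk_mem_prod hαp hβp)
  have hgaps := add_le_add (hbound1 α hα αp hαp hαp_min) (hbound2 β hβ βp hβp hβp_min)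
  rw [← mul_add] at hgaps
  have hsum_pos : 0 < c * (frobNorm (α - αp) + frobNorm (β - βp)) :=
    mul_pos hc (hdist_pos.trans_le pairFrobDist_le_add)
  have hratio := sSup_gaps_add_le_two_mul_sSup_directionalRatios F Fadj hadj v ⟨α, hα⟩ ⟨β, hβ⟩
    α β (fun α' hα' β' hβ' => hdiam α hα α' hα' β hβ β' hβ') (hsum_pos.trans_le hgaps)
  calc c / 2 * pairFrobDist α αp β βp
      ≤ c / 2 * (frobNorm (α - αp) + frobNorm (β - βp)) := by gcongr; exact pairFrobDist_le_add
    _ ≤ sSup (directionalRatios (F β) α (Fadj α) β (spectraplex n) (spectraplex m)) := by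
      linarith

/-- SP-MS from the two one-sided error bounds: if
`max_{β'}(Tr(α F(β')) − v) ≥ c‖α − Π_{A*}α‖_F` and
`max_{α'}(v − Tr(α' F(β))) ≥ c‖β − Π_{B*}β‖_F` hold for all `(α,β)`, and the joint space
has diameter at most 2, then for every `z = (α,β) ∉ Z* = A* × B*`,
`sup_{z'≠z} ⟪G(z), z−z'⟫/‖z−z'‖ ≥ (c/2)‖z − Π_{Z*}z‖`, with `G(α,β) = (F(β), −F*(α))`. -/
theorem spms_from_one_sided_bounds (n m : ℕ) [NeZero n] [NeZero m]
    (F : Matrix (Fin m) (Fin m) ℂ →ₗ[ℝ] Matrix (Fin n) (Fin n) ℂ)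
    (Fadj : Matrix (Fin n) (Fin n) ℂ →ₗ[ℝ] Matrix (Fin m) (Fin m) ℂ)
    (hadj : ∀ (A : Matrix (Fin n) (Fin n) ℂ) (B : Matrix (Fin m) (Fin m) ℂ),
      (Matrix.trace (A * F B)).re = (Matrix.trace (Fadj A * B)).re)
    (v : ℝ)
    (Astar : Set (Matrix (Fin n) (Fin n) ℂ))
    (hAstar : Astar = {α ∈ spectraplex n | ∀ β ∈ spectraplex m,
      (Matrix.trace (α * F β)).re ≤ v})
    (Bstar : Set (Matrix (Fin m) (Fin m) ℂ))
    (hBstar : Bstar = {β ∈ spectraplex m | ∀ α ∈ spectraplex n,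
      v ≤ (Matrix.trace (α * F β)).re})
    (c : ℝ) (hc : 0 < c)
    (hbound1 : ∀ α ∈ spectraplex n, ∀ αp ∈ Astar,
      (∀ y ∈ Astar, frobNorm (α - αp) ≤ frobNorm (α - y)) →
      c * frobNorm (α - αp) ≤
        sSup ((fun β' => (Matrix.trace (α * F β')).re - v) '' spectraplex m))
    (hbound2 : ∀ β ∈ spectraplex m, ∀ βp ∈ Bstar,
      (∀ y ∈ Bstar, frobNorm (β - βp) ≤ frobNorm (β - y)) →
      c * frobNorm (β - βp) ≤
        sSup ((fun α' => v - (Matrix.trace (α' * F β)).re) '' spectraplex n))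
    (hdiam : ∀ α ∈ spectraplex n, ∀ α' ∈ spectraplex n, ∀ β ∈ spectraplex m,
      ∀ β' ∈ spectraplex m,
      Real.sqrt (frobNorm (α - α') ^ 2 + frobNorm (β - β') ^ 2) ≤ 2) :
    ∀ α ∈ spectraplex n, ∀ β ∈ spectraplex m, (α, β) ∉ Astar ×ˢ Bstar →
    ∀ αp ∈ Astar, (∀ y ∈ Astar, frobNorm (α - αp) ≤ frobNorm (α - y)) →
    ∀ βp ∈ Bstar, (∀ y ∈ Bstar, frobNorm (β - βp) ≤ frobNorm (β - y)) →
      c / 2 * Real.sqrt (frobNorm (α - αp) ^ 2 + frobNorm (β - βp) ^ 2) ≤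
        sSup {r : ℝ | ∃ α' ∈ spectraplex n, ∃ β' ∈ spectraplex m, (α', β') ≠ (α, β) ∧
          r = ((Matrix.trace (F β * (α - α'))).re - (Matrix.trace (Fadj α * (β - β'))).re) /
            Real.sqrt (frobNorm (α - α') ^ 2 + frobNorm (β - β') ^ 2)} :=
  spms_from_one_sided_bounds_general n m F Fadj hadj v Astar Bstar c hc hbound1 hbound2 hdiam
end
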